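/- Let n, k ∈ ℕ with n odd, and let a, b ∈ {0, 1, −1}^n be vectors with disjoint supports such that the circulant matrices c(a) and c(b) are circulant weighing matrices CW(n, k²). Define w ∈ ℝ^{2n} componentwise by: w_s = a_{s/2} + b_{s/2} if s is even; w_s = a_{(s+n)/2} − b_{(s+n)/2} if s is odd and s ≤ n − 2; and w_s = a_{(s−n)/2} − b_{(s−n)/2} if s is odd and s > n − 2. Then the circulant matrix c(w) is a circulant weighing matrix CW(2n, 4k²), i.e., w has entries in {0, 1, −1} and c(w) c(w)ᵀ = 4k² I. -/

import Mathlib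

/-!
For odd `n`, `s ↦ (s mod 2, s / 2)`, where `s / 2 := s · 2⁻¹ mod n` (`halfMod`), identifies `ℤ/2n`
with `ℤ/2 × ℤ/n`, and in these coordinates `w s = a (s / 2) + (-1)^s b (s / 2)`. Expanding the
periodic autocorrelation of `w`, the cross terms cancel between `s` and `s + n` (same `s / 2`,
opposite sign), which leaves `P_w(d) = 2 P_a(d / 2) + 2 (-1)^d P_b(d / 2)`. This is `4k²` at `d = 0`
and vanishes elsewhere: the only `d ≠ 0` with `d / 2 = 0` is `d = n`, where the sign is `-1` and
the two terms cancel.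
-/

open Matrix

/-- The circulant matrix `c(a)` with entries `c(a)_{i,j} = a_{(j-i) mod n}`. -/
def circ {n : ℕ} (a : Fin n → ℝ) : Matrix (Fin n) (Fin n) ℝ :=
  Matrix.of fun i j => a (j - i)

open Finset

section Autocorrelation

def autocorr {n : ℕ} (a : Fin n → ℝ) (d : Fin n) : ℝ :=
  ∑ t, a t * a (t - d)

variable {n : ℕ} [NeZero n]

theorem circ_mul_transpose_apply (a : Fin n → ℝ) (i j : Fin n) :
    (circ a * (circ a)ᵀ) i j = autocorr a (j - i) := by
  simp only [mul_apply, transpose_apply, circ, of_apply, autocorr]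
  exact Fintype.sum_equiv (Equiv.subRight i) _ _ fun t => by
    rw [Equiv.subRight_apply, sub_sub_sub_cancel_right]

theorem circ_mul_transpose_eq_smul_one_iff (a : Fin n → ℝ) (c : ℝ) :
    circ a * (circ a)ᵀ = c • 1 ↔ ∀ d, autocorr a d = if d = 0 then c else 0 := by
  constructor
  · intro h d
    have h0d := congrFun (congrFun h 0) d
    rw [circ_mul_transpose_apply, sub_zero] at h0d
    simp [h0d, one_apply, eq_comm]
  · intro h
    ext i j
    simp [circ_mul_transpose_apply, h, one_apply, sub_eq_zero, eq_comm]

end Autocorrelation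

section Sign

variable {R : Type*} [Ring R] {n : ℕ}

theorem neg_one_pow_mod_two_mul (x n : ℕ) : (-1 : R) ^ (x % (2 * n)) = (-1) ^ x := by
  rw [neg_one_pow_eq_pow_mod_two, Nat.mod_mod_of_dvd _ (dvd_mul_right 2 n),
    ← neg_one_pow_eq_pow_mod_two]

theorem neg_one_pow_val_add (s d : Fin (2 * n)) :
    (-1 : R) ^ (s + d).val = (-1) ^ s.val * (-1) ^ d.val := by
  rw [Fin.val_add, neg_one_pow_mod_two_mul, pow_add]

theorem neg_one_pow_val_sub [NeZero n] (s d : Fin (2 * n)) :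
    (-1 : R) ^ (s - d).val = (-1) ^ s.val * (-1) ^ d.val := by
  have h := neg_one_pow_val_add (R := R) (s - d) d
  rw [sub_add_cancel] at h
  rw [h, mul_assoc, ← pow_add, ← two_mul, pow_mul, neg_one_sq, one_pow, mul_one]

end Sign

theorem sum_fin_two_mul {n : ℕ} {M : Type*} [AddCommMonoid M] (F : Fin (2 * n) → M) :
    ∑ s, F s = ∑ t : Fin n, (F ⟨t, by omega⟩ + F ⟨n + t, by omega⟩) := by
  rw [← (finCongr (two_mul n)).symm.sum_comp, Fin.sum_univ_add, ← sum_add_distrib]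
  rfl

section HalfMod

open Fin.NatCast Fin.CommRing

variable {n : ℕ} [NeZero n]

def halfMod (n : ℕ) [NeZero n] (s : Fin (2 * n)) : Fin n :=
  (s.val : Fin n) * ((n + 1) / 2 : ℕ)

theorem two_mul_natCast_half_succ (hn : Odd n) : (2 : Fin n) * ((n + 1) / 2 : ℕ) = 1 := by
  have h : ((2 * ((n + 1) / 2) : ℕ) : Fin n) = ((n + 1 : ℕ) : Fin n) := by
    congr 1
    obtain ⟨j, rfl⟩ := hn
    omega
  push_cast at h
  rwa [Fin.natCast_self, zero_add] at h

theorem natCast_mod_two_mul (x : ℕ) : ((x % (2 * n) : ℕ) : Fin n) = x := by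
  ext
  simp only [Fin.val_natCast, Nat.mod_mod_of_dvd _ (dvd_mul_left n 2)]

theorem halfMod_add (s d : Fin (2 * n)) : halfMod n (s + d) = halfMod n s + halfMod n d := by
  simp only [halfMod, Fin.val_add, natCast_mod_two_mul, Nat.cast_add, add_mul]

theorem halfMod_sub (s d : Fin (2 * n)) : halfMod n (s - d) = halfMod n s - halfMod n d := by
  rw [eq_sub_iff_add_eq, ← halfMod_add, sub_add_cancel]

theorem halfMod_zero : halfMod n 0 = 0 := by
  simp [halfMod]

theorem halfMod_eq_of_modEq (hn : Odd n) {s : Fin (2 * n)} {u : ℕ} (hu : u < n)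
    (h : 2 * u ≡ s.val [MOD n]) : halfMod n s = ⟨u, hu⟩ := by
  have hs : (s.val : Fin n) = ((2 * u : ℕ) : Fin n) := by
    ext
    simp only [Fin.val_natCast]
    exact h.symm
  rw [halfMod, hs, Nat.cast_mul, mul_right_comm, Nat.cast_ofNat, two_mul_natCast_half_succ hn,
    one_mul]
  ext
  exact Nat.mod_eq_of_lt hu

theorem val_eq_of_halfMod_eq_zero (hn : Odd n) {d : Fin (2 * n)} (hd : d ≠ 0)
    (h : halfMod n d = 0) : d.val = n := by
  have hdvd : n ∣ d.val := by
    rw [← Fin.natCast_eq_zero]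
    calc (d.val : Fin n) = halfMod n d * 2 := by
          rw [halfMod, mul_assoc, mul_comm _ 2, two_mul_natCast_half_succ hn, mul_one]
      _ = 0 := by rw [h, zero_mul]
  obtain ⟨c, hc⟩ := hdvd
  have hlt := d.isLt
  have hne : d.val ≠ 0 := fun h0 => hd (Fin.ext h0)
  rcases c with _ | _ | c
  · omega
  · omega
  · nlinarith

theorem isUnit_natCast_half_succ (hn : Odd n) : IsUnit (((n + 1) / 2 : ℕ) : Fin n) :=
  .of_mul_eq_one_right _ (two_mul_natCast_half_succ hn)

theorem halfMod_mk (t : Fin n) :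
    halfMod n ⟨t, by omega⟩ = t * ((n + 1) / 2 : ℕ) :=
  congrArg (· * _) (Fin.cast_val_eq_self t)

theorem halfMod_mk_add_self (t : Fin n) :
    halfMod n ⟨n + t, by omega⟩ = halfMod n ⟨t, by omega⟩ := by
  simp only [halfMod, Nat.cast_add, Fin.natCast_self, zero_add]

theorem sum_comp_halfMod (hn : Odd n) {M : Type*} [AddCommMonoid M] (g : Fin n → M) :
    ∑ s, g (halfMod n s) = 2 • ∑ t, g t := by
  rw [sum_fin_two_mul, two_nsmul,
    ← Equiv.sum_comp (Units.mulRight (isUnit_natCast_half_succ hn).unit) g, ← sum_add_distrib]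
  simp only [halfMod_mk_add_self, halfMod_mk, Units.mulRight_apply, IsUnit.unit_spec]

theorem sum_neg_one_pow_mul_comp_halfMod (hn : Odd n) {R : Type*} [Ring R] (g : Fin n → R) :
    ∑ s, (-1 : R) ^ s.val * g (halfMod n s) = 0 := by
  rw [sum_fin_two_mul]
  refine sum_eq_zero fun t _ => ?_
  rw [halfMod_mk_add_self, pow_add, hn.neg_one_pow, neg_one_mul, neg_mul, add_neg_cancel]

end HalfMod

theorem autocorr_eq_of_eq_halfMod {n : ℕ} [NeZero n] (hn : Odd n) {w : Fin (2 * n) → ℝ}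
    {a b : Fin n → ℝ} (hw : ∀ s, w s = a (halfMod n s) + (-1) ^ s.val * b (halfMod n s))
    (d : Fin (2 * n)) :
    autocorr w d = 2 * autocorr a (halfMod n d) + 2 * (-1) ^ d.val * autocorr b (halfMod n d) := by
  set e : ℝ := (-1) ^ d.val
  set m := halfMod n d
  have hterm : ∀ s, w s * w (s - d) =
      (a (halfMod n s) * a (halfMod n s - m) + e * (b (halfMod n s) * b (halfMod n s - m))) +
        (-1) ^ s.val * (e * a (halfMod n s) * b (halfMod n s - m) +
          b (halfMod n s) * a (halfMod n s - m)) := by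
    intro s
    have hsq : ((-1 : ℝ) ^ s.val) ^ 2 = 1 := by
      rw [← pow_mul, mul_comm, pow_mul, neg_one_sq, one_pow]
    rw [hw, hw, halfMod_sub, neg_one_pow_val_sub]
    linear_combination (e * b (halfMod n s) * b (halfMod n s - m)) * hsq
  rw [autocorr, sum_congr rfl fun s _ => hterm s, sum_add_distrib,
    sum_comp_halfMod hn fun t => a t * a (t - m) + e * (b t * b (t - m)),
    sum_neg_one_pow_mul_comp_halfMod hn fun t => e * a t * b (t - m) + b t * a (t - m),
    add_zero, sum_add_distrib, ← mul_sum, nsmul_eq_mul, autocorr, autocorr]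
  ring

theorem add_mul_mem_of_disjoint {x y ε : ℝ} (hx : x ∈ ({0, 1, -1} : Set ℝ))
    (hy : y ∈ ({0, 1, -1} : Set ℝ)) (hxy : x = 0 ∨ y = 0) (hε : ε = 1 ∨ ε = -1) :
    x + ε * y ∈ ({0, 1, -1} : Set ℝ) := by
  rcases hxy with rfl | rfl
  · simp only [Set.mem_insert_iff, Set.mem_singleton_iff] at hy ⊢
    rcases hε with rfl | rfl <;> rcases hy with rfl | rfl | rfl <;> norm_num
  · simpa using hx

/-- Disjoint-support doubling construction: from two `CW(n, k²)` (with `n` odd) whose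
first rows have disjoint supports, the interleaved vector `w` yields a `CW(2n, 4k²)`. -/
theorem disjoint_support_construction {n k : ℕ} (hodd : Odd n)
    (a b : Fin n → ℝ)
    (ha : ∀ s, a s ∈ ({0, 1, -1} : Set ℝ)) (hb : ∀ s, b s ∈ ({0, 1, -1} : Set ℝ))
    (hdisj : ∀ s, a s = 0 ∨ b s = 0)
    (hA : circ a * (circ a)ᵀ = ((k : ℝ) ^ 2) • (1 : Matrix (Fin n) (Fin n) ℝ))
    (hB : circ b * (circ b)ᵀ = ((k : ℝ) ^ 2) • (1 : Matrix (Fin n) (Fin n) ℝ))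
    (w : Fin (2 * n) → ℝ)
    (hweven : ∀ s : Fin (2 * n), s.val % 2 = 0 →
      w s = a ⟨s.val / 2, by have := s.isLt; omega⟩ + b ⟨s.val / 2, by have := s.isLt; omega⟩)
    (hwodd₁ : ∀ s : Fin (2 * n), s.val % 2 = 1 → ∀ _hle : s.val ≤ n - 2,
      w s = a ⟨(s.val + n) / 2, by have := s.isLt; omega⟩ -
            b ⟨(s.val + n) / 2, by have := s.isLt; omega⟩)
    (hwodd₂ : ∀ s : Fin (2 * n), s.val % 2 = 1 → n - 2 < s.val →
      w s = a ⟨(s.val - n) / 2, by have := s.isLt; omega⟩ -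
            b ⟨(s.val - n) / 2, by have := s.isLt; omega⟩) :
    (∀ s, w s ∈ ({0, 1, -1} : Set ℝ)) ∧
      circ w * (circ w)ᵀ = ((4 * (k : ℝ) ^ 2)) • (1 : Matrix (Fin (2 * n)) (Fin (2 * n)) ℝ) := by
  have : NeZero n := ⟨hodd.pos.ne'⟩
  have hw : ∀ s, w s = a (halfMod n s) + (-1) ^ s.val * b (halfMod n s) := by
    intro s
    have hs := s.isLt
    have hn := Nat.odd_iff.1 hodd
    rcases Nat.mod_two_eq_zero_or_one s.val with he | ho
    · rw [hweven s he, halfMod_eq_of_modEq hodd (u := s.val / 2) (by omega)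
        (by rw [Nat.ModEq, show 2 * (s.val / 2) = s.val by omega]),
        (Nat.even_iff.2 he).neg_one_pow, one_mul]
    rw [(Nat.odd_iff.2 ho).neg_one_pow, neg_one_mul, ← sub_eq_add_neg]
    by_cases hle : s.val ≤ n - 2
    · rw [hwodd₁ s ho hle, halfMod_eq_of_modEq hodd (u := (s.val + n) / 2) (by omega)
        (by rw [Nat.ModEq, show 2 * ((s.val + n) / 2) = s.val + n by omega, Nat.add_mod_right])]
    · rw [hwodd₂ s ho (by omega), halfMod_eq_of_modEq hodd (u := (s.val - n) / 2) (by omega)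
        (by rw [Nat.ModEq, ← Nat.add_mod_right, show 2 * ((s.val - n) / 2) + n = s.val by omega])]
  refine ⟨fun s => hw s ▸ add_mul_mem_of_disjoint (ha _) (hb _) (hdisj _) (neg_one_pow_eq_or ℝ _),
    (circ_mul_transpose_eq_smul_one_iff w _).2 fun d => ?_⟩
  rw [autocorr_eq_of_eq_halfMod hodd hw, (circ_mul_transpose_eq_smul_one_iff a _).1 hA,
    (circ_mul_transpose_eq_smul_one_iff b _).1 hB]
  rcases eq_or_ne d 0 with rfl | hd
  · simp only [halfMod_zero, if_true, Fin.val_zero, pow_zero]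
    ring
  rcases eq_or_ne (halfMod n d) 0 with hm | hm
  · rw [if_neg hd, if_pos hm, val_eq_of_halfMod_eq_zero hodd hd hm, hodd.neg_one_pow]
    ring
  · simp only [if_neg hd, if_neg hm]
    ring
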